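/- Let P be a natural unit interval order on [n], let G = inc(P), and fix N ≥ n. Suppose (c_λ(t))_{λ ⊢ n} is a family of polynomials in ℚ[t], indexed by partitions λ of n, satisfying X_G(x_1,…,x_N;t) = Σ_{λ⊢n} c_λ(t) e_λ(x_1,…,x_N), where e_λ = e_{λ_1} e_{λ_2} ⋯ and e_m is the elementary symmetric polynomial of degree m in x_1,…,x_N. Then for every j ≥ 1, Σ_{λ⊢n with exactly j parts} c_λ(t) = Σ_{o ∈ O(G,j)} t^{asc(o)}, where O(G,j) is the set of acyclic orientations of G with exactly j sinks and asc(o) is the number of edges of G directed by o from i to j with i < j. -/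

import Mathlib

open scoped Classical

/-- Two elements are incomparable with respect to a strict order relation `lt`. -/
def Incomp {n : ℕ} (lt : Fin n → Fin n → Prop) (a b : Fin n) : Prop :=
  a ≠ b ∧ ¬ lt a b ∧ ¬ lt b a

/-- A natural unit interval order on `[n]` (modeled on `Fin n`): a strict partial order
`lt` such that (i) `x <_P y` implies `x < y` in the natural order, and (ii) whenever
`x <_P z` and `y` is `P`-incomparable to both `x` and `z`, then `x < y < z` in the
natural order.  (Irreflexivity and asymmetry follow from condition (i).) -/
structure NUIO (n : ℕ) where
  lt : Fin n → Fin n → Prop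
  trans : ∀ a b c, lt a b → lt b c → lt a c
  natural : ∀ a b, lt a b → (a : ℕ) < (b : ℕ)
  unit : ∀ x y z, lt x z → Incomp lt x y → Incomp lt y z →
    (x : ℕ) < (y : ℕ) ∧ (y : ℕ) < (z : ℕ)

/-- `inv_G(σ)` where `G` is the incomparability graph of the relation `lt`:
the number of pairs `i < j` with `σ(i) > σ(j)` and `{σ(i), σ(j)}` an edge of `G`. -/
noncomputable def invInc {n : ℕ} (lt : Fin n → Fin n → Prop) (σ : Equiv.Perm (Fin n)) : ℕ :=
  (Finset.univ.filter fun p : Fin n × Fin n =>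
    p.1 < p.2 ∧ (σ p.2 : ℕ) < (σ p.1 : ℕ) ∧ Incomp lt (σ p.1) (σ p.2)).card

/-- `maj_P(σ)`: the sum of the (1-based) positions `i` with `σ(i) >_P σ(i+1)`. -/
noncomputable def majP {n : ℕ} (lt : Fin n → Fin n → Prop) (σ : Equiv.Perm (Fin n)) : ℕ :=
  ∑ j ∈ Finset.range n,
    if h : j + 1 < n then
      (if lt (σ ⟨j + 1, h⟩) (σ ⟨j, Nat.lt_of_succ_lt h⟩) then j + 1 else 0)
    else 0

/-- The number of edges of the incomparability graph of the relation `lt`. -/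
noncomputable def numIncEdges {n : ℕ} (lt : Fin n → Fin n → Prop) : ℕ :=
  (Finset.univ.filter fun p : Fin n × Fin n => p.1 < p.2 ∧ Incomp lt p.1 p.2).card

/-- The ascent number of a coloring `c` of the incomparability graph of `lt`. -/
noncomputable def ascC {n N : ℕ} (lt : Fin n → Fin n → Prop) (c : Fin n → Fin N) : ℕ :=
  (Finset.univ.filter fun p : Fin n × Fin n =>
    p.1 < p.2 ∧ Incomp lt p.1 p.2 ∧ (c p.1 : ℕ) < (c p.2 : ℕ)).card

/-- The chromatic quasisymmetric polynomial `X_{inc(P)}(x_1,…,x_N;t)`, over `ℚ`. -/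
noncomputable def chromIncQSymQ (N n : ℕ) (lt : Fin n → Fin n → Prop) :
    Polynomial (MvPolynomial (Fin N) ℚ) :=
  ∑ c ∈ Finset.univ.filter (fun c : Fin n → Fin N =>
      ∀ a b : Fin n, Incomp lt a b → c a ≠ c b),
    Polynomial.X ^ ascC lt c * Polynomial.C (∏ i, MvPolynomial.X (c i))

/-- Partitions of `n` (with at most `n` parts, weakly decreasing, trailing zeros):
`p : Fin n → Fin (n+1)` weakly decreasing with `∑ p i = n`. -/
noncomputable def partitionsOf (n : ℕ) : Finset (Fin n → Fin (n + 1)) :=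
  Finset.univ.filter fun p =>
    (∀ i j : Fin n, i ≤ j → p j ≤ p i) ∧ (∑ i, (p i : ℕ)) = n

/-- `e_λ = e_{λ_1} e_{λ_2} ⋯` for the partition `p` (note `e_0 = 1`). -/
noncomputable def eProd (N : ℕ) {n : ℕ} (p : Fin n → Fin (n + 1)) :
    MvPolynomial (Fin N) ℚ :=
  ∏ i, MvPolynomial.esymm (Fin N) ℚ (p i : ℕ)

/-- `o` is an orientation of the incomparability graph of `lt`: it directs each edge
in exactly one direction, and directs nothing else. -/
def IsOrientation {n : ℕ} (lt : Fin n → Fin n → Prop) (o : Fin n → Fin n → Bool) : Prop :=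
  (∀ a b, o a b = true → Incomp lt a b) ∧
  (∀ a b, Incomp lt a b → (o a b = true ↔ o b a = false))

/-- The acyclic orientations of the incomparability graph of `lt` having exactly `j`
sinks (a sink is a vertex with no outgoing edge). -/
noncomputable def acyclicOrientations {n : ℕ} (lt : Fin n → Fin n → Prop) (j : ℕ) :
    Finset (Fin n → Fin n → Bool) :=
  Finset.univ.filter fun o => IsOrientation lt o ∧
    (∀ a, ¬ Relation.TransGen (fun x y => o x y = true) a a) ∧
    (Finset.univ.filter fun a : Fin n => ∀ b, o a b = false).card = j

/-- `asc(o)`: the number of edges directed by `o` from `i` to `j` with `i < j`. -/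
noncomputable def ascOrient {n : ℕ} (o : Fin n → Fin n → Bool) : ℕ :=
  (Finset.univ.filter fun p : Fin n × Fin n => p.1 < p.2 ∧ o p.1 p.2 = true).card

/-!
Both sides of the hypothesis are built from the generating functions `strictColoringSum r` of
colorings that strictly increase along an acyclic relation `r`. Grouping the proper colorings of
`G` by the acyclic orientation they induce, the coefficient of `t^d` in `X_G` is the sum of these
over the acyclic orientations with `d` ascents; and `e_λ` is the one of a disjoint union of
chains of lengths `λ_i`, whose sinks are its nonempty chains. The linear functional
`sinkFunctional N j` sends `strictColoringSum r` to `1` or `0` according as `r` has exactly `j`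
sinks, so applying it to the coefficient of `t^d` on both sides gives the theorem.

To evaluate it, group the colorings by their top color class `A`, which is a nonempty set of
sinks; below it sits a coloring of the complement onto an initial segment of colors, and peeling
off top classes once more shows that these are counted with alternating signs by
`(-1) ^ #(univ \ A)`.
-/

open Finset

theorem Finset.sum_powerset_neg_one_pow_card_mul_choose {R α : Type*} [CommRing R]
    (M : Finset α) (j : ℕ) :
    ∑ A ∈ M.powerset, (-1 : R) ^ #A * ((#A).choose j : R) =
      if #M = j then (-1) ^ j else 0 := by
  induction M using Finset.induction_on generalizing j with
  | empty => cases j <;> simp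
  | insert a M ha ih =>
    have hins : ∀ A ∈ M.powerset, (-1 : R) ^ #(insert a A) * ((#(insert a A)).choose j : R) =
        -((-1) ^ #A * ((#A + 1).choose j : R)) := fun A hA => by
      rw [card_insert_of_notMem fun h => ha (mem_powerset.mp hA h), pow_succ]; ring
    rw [sum_powerset_insert ha, sum_congr rfl hins, sum_neg_distrib, card_insert_of_notMem ha]
    cases j with
    | zero => simp
    | succ j =>
      simp only [Nat.choose_succ_succ', Nat.cast_add, mul_add, sum_add_distrib, ih]
      split_ifs <;> first | omega | ring

theorem neg_one_pow_card_sdiff {R α : Type*} [CommRing R] {A S : Finset α} (h : A ⊆ S) :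
    (-1 : R) ^ #(S \ A) = (-1) ^ #S * (-1) ^ #A := by
  rw [← card_sdiff_add_card_eq_card h, pow_add, mul_assoc, ← pow_add, Even.neg_one_pow ⟨_, rfl⟩,
    mul_one]

theorem not_transGen_self_of_lt_comp {V α : Type*} [Preorder α] {r : V → V → Prop} (φ : V → α)
    (h : ∀ a b, r a b → φ a < φ b) (a : V) : ¬ Relation.TransGen r a a := fun hr =>
  lt_irrefl (φ a) (by simpa [Relation.transGen_eq_self] using hr.lift φ h)

section StrictColorings

variable {V : Type*} [Fintype V] {N : ℕ}

def IsStrictColoring (r : V → V → Prop) (f : V → Fin N) : Prop :=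
  ∀ a b, r a b → f a < f b

noncomputable def relMaximals (r : V → V → Prop) (S : Finset V) : Finset V :=
  S.filter fun a => ∀ b ∈ S, ¬ r a b

theorem relMaximals_nonempty {r : V → V → Prop} (hr : ∀ a, ¬ Relation.TransGen r a a)
    {S : Finset V} (hS : S.Nonempty) : (relMaximals r S).Nonempty := by
  have : IsTrans V (flip (Relation.TransGen r)) := ⟨fun _ _ _ hab hbc => hbc.trans hab⟩
  have : Std.Irrefl (flip (Relation.TransGen r)) := ⟨hr⟩
  obtain ⟨m, hmS, hm⟩ :=
    (Finite.wellFounded_of_trans_of_irrefl (flip (Relation.TransGen r))).has_min (S : Set V) hS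
  exact ⟨m, mem_filter.mpr ⟨hmS, fun b hb hmb => hm b hb (.single hmb)⟩⟩

/-- The strict colorings of `S` using exactly the colors `0, …, k - 1`, extended by `0` off `S`
so that they all live in the fixed finite type `V → Fin N`. -/
noncomputable def surjStrictColorings (N : ℕ) (r : V → V → Prop) (S : Finset V) (k : ℕ) :
    Finset (V → Fin N) :=
  univ.filter fun f => (∀ a ∉ S, (f a : ℕ) = 0) ∧ S.image (fun a => (f a : ℕ)) = range k ∧
    ∀ a ∈ S, ∀ b ∈ S, r a b → f a < f b

variable {r : V → V → Prop} {S A : Finset V} {k : ℕ}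

theorem surjStrictColorings_eq_empty_of_card_lt (h : #S < k) :
    surjStrictColorings N r S k = ∅ := by
  refine filter_eq_empty_iff.mpr fun f _ ⟨_, himg, _⟩ => ?_
  have := card_image_le (s := S) (f := fun a => (f a : ℕ))
  rw [himg, card_range] at this
  omega

theorem surjStrictColorings_zero (hS : S.Nonempty) : surjStrictColorings N r S 0 = ∅ :=
  filter_eq_empty_iff.mpr fun f _ ⟨_, himg, _⟩ => by simp [hS.ne_empty] at himg

theorem card_surjStrictColorings_empty_zero (hN : 0 < N) :
    #(surjStrictColorings N r ∅ 0) = 1 := by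
  rw [card_eq_one]
  refine ⟨fun _ => ⟨0, hN⟩, ?_⟩
  ext f
  simp [surjStrictColorings, funext_iff, Fin.ext_iff]

theorem restrict_mem_surjStrictColorings (hk : k < N) {f : V → Fin N}
    (hf : f ∈ (surjStrictColorings N r S (k + 1)).filter
      fun f => S.filter (fun a => (f a : ℕ) = k) = A) :
    (fun a => if a ∈ A then ⟨0, by omega⟩ else f a) ∈ surjStrictColorings N r (S \ A) k := by
  simp only [surjStrictColorings, mem_filter, mem_univ, true_and] at hf ⊢
  obtain ⟨⟨hoff, himg, hstrict⟩, hfib⟩ := hf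
  have hmemA : ∀ a ∈ S, a ∈ A ↔ (f a : ℕ) = k := fun a ha => by simp [← hfib, ha]
  have hle : ∀ a ∈ S, (f a : ℕ) < k + 1 := fun a ha =>
    mem_range.mp (himg ▸ mem_image_of_mem _ ha)
  refine ⟨fun a ha => ?_, ?_, fun a ha b hb hab => ?_⟩
  · split_ifs with haA
    · rfl
    · exact hoff a fun haS => ha (mem_sdiff.mpr ⟨haS, haA⟩)
  · ext v
    simp only [mem_image, mem_sdiff, mem_range]
    constructor
    · rintro ⟨a, ⟨haS, haA⟩, rfl⟩
      rw [if_neg haA]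
      have := hle a haS
      have := (hmemA a haS).not.mp haA
      omega
    · intro hv
      obtain ⟨a, haS, hav⟩ := mem_image.mp (himg ▸ mem_range.mpr (Nat.lt_succ_of_lt hv))
      have haA : a ∉ A := fun h => by have := (hmemA a haS).mp h; omega
      exact ⟨a, ⟨haS, haA⟩, by rw [if_neg haA, hav]⟩
  · rw [mem_sdiff] at ha hb
    simpa only [if_neg ha.2, if_neg hb.2] using hstrict a ha.1 b hb.1 hab

theorem extend_mem_surjStrictColorings (hk : k < N) (hA : A ⊆ relMaximals r S)
    (hA₀ : A.Nonempty) {g : V → Fin N} (hg : g ∈ surjStrictColorings N r (S \ A) k) :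
    (fun a => if a ∈ A then ⟨k, hk⟩ else g a) ∈ (surjStrictColorings N r S (k + 1)).filter
      fun f => S.filter (fun a => (f a : ℕ) = k) = A := by
  have hAS : A ⊆ S := hA.trans (filter_subset _ _)
  simp only [surjStrictColorings, mem_filter, mem_univ, true_and] at hg ⊢
  obtain ⟨hoff, himg, hstrict⟩ := hg
  have hlt : ∀ a ∈ S, a ∉ A → (g a : ℕ) < k := fun a ha haA =>
    mem_range.mp (himg ▸ mem_image_of_mem _ (mem_sdiff.mpr ⟨ha, haA⟩))
  refine ⟨⟨fun a ha => ?_, ?_, fun a ha b hb hab => ?_⟩, ?_⟩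
  · rw [if_neg fun h => ha (hAS h)]
    exact hoff a fun h => ha (mem_sdiff.mp h).1
  · ext v
    simp only [mem_image, mem_range]
    constructor
    · rintro ⟨a, haS, rfl⟩
      split_ifs with haA
      · exact Nat.lt_succ_self k
      · exact Nat.lt_succ_of_lt (hlt a haS haA)
    · intro hv
      rcases Nat.lt_succ_iff_lt_or_eq.mp hv with hv | rfl
      · obtain ⟨a, ha, hav⟩ := mem_image.mp (himg ▸ mem_range.mpr hv)
        obtain ⟨haS, haA⟩ := mem_sdiff.mp ha
        exact ⟨a, haS, by rw [if_neg haA, hav]⟩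
      · obtain ⟨a, haA⟩ := hA₀
        exact ⟨a, hAS haA, by rw [if_pos haA]⟩
  · have hamax : a ∉ A := fun haA => (mem_filter.mp (hA haA)).2 b hb hab
    rw [if_neg hamax]
    split_ifs with hbA
    · exact Fin.lt_def.mpr (hlt a ha hamax)
    · exact hstrict a (mem_sdiff.mpr ⟨ha, hamax⟩) b (mem_sdiff.mpr ⟨hb, hbA⟩) hab
  · ext a
    simp only [mem_filter]
    constructor
    · rintro ⟨haS, hak⟩
      by_contra haA
      rw [if_neg haA] at hak
      exact absurd hak (hlt a haS haA).ne
    · intro haA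
      exact ⟨hAS haA, by rw [if_pos haA]⟩

theorem card_fiber_surjStrictColorings_succ (hk : k < N) (hA : A ⊆ relMaximals r S)
    (hA₀ : A.Nonempty) :
    #((surjStrictColorings N r S (k + 1)).filter
        fun f => S.filter (fun a => (f a : ℕ) = k) = A) =
      #(surjStrictColorings N r (S \ A) k) := by
  refine card_nbij' (fun f a => if a ∈ A then ⟨0, by omega⟩ else f a)
    (fun g a => if a ∈ A then ⟨k, hk⟩ else g a)
    (fun f hf => restrict_mem_surjStrictColorings hk hf)
    (fun g hg => extend_mem_surjStrictColorings hk hA hA₀ hg) (fun f hf => ?_) (fun g hg => ?_)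
  · simp only [coe_filter, Set.mem_ofPred_eq] at hf
    funext a
    dsimp only
    split_ifs with haA
    · rw [← hf.2] at haA
      exact Fin.ext (mem_filter.mp haA).2.symm
    · rfl
  · simp only [mem_coe, surjStrictColorings, mem_filter] at hg
    funext a
    dsimp only
    split_ifs with haA
    · exact Fin.ext (hg.2.1 a fun h => (mem_sdiff.mp h).2 haA).symm
    · rfl

theorem sum_surjStrictColorings_succ {M : Type*} [AddCommMonoid M] (hk : k < N)
    (φ : Finset V → M) :
    ∑ f ∈ surjStrictColorings N r S (k + 1), φ (S.filter fun a => (f a : ℕ) = k) =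
      ∑ A ∈ (relMaximals r S).powerset.erase ∅, #(surjStrictColorings N r (S \ A) k) • φ A := by
  refine (sum_fiberwise_of_maps_to (t := (relMaximals r S).powerset.erase ∅)
    (g := fun f => S.filter fun a => (f a : ℕ) = k) (fun f hf => ?_)
    _).symm.trans (sum_congr rfl fun A hA => ?_)
  · simp only [surjStrictColorings, mem_filter, mem_univ, true_and] at hf
    obtain ⟨-, himg, hstrict⟩ := hf
    refine mem_erase.mpr ⟨?_, mem_powerset.mpr fun a ha => ?_⟩
    · obtain ⟨a, haS, hak⟩ := mem_image.mp (himg ▸ mem_range.mpr k.lt_succ_self)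
      exact nonempty_iff_ne_empty.mp ⟨a, mem_filter.mpr ⟨haS, hak⟩⟩
    · obtain ⟨haS, hak⟩ := mem_filter.mp ha
      refine mem_filter.mpr ⟨haS, fun b hb hab => ?_⟩
      have := mem_range.mp (himg ▸ mem_image_of_mem (fun a => (f a : ℕ)) hb)
      have := Fin.lt_def.mp (hstrict a haS b hb hab)
      omega
  · obtain ⟨hA₀, hA⟩ := mem_erase.mp hA
    rw [← card_fiber_surjStrictColorings_succ hk (mem_powerset.mp hA)
      (nonempty_iff_ne_empty.mpr hA₀), ← sum_const]
    exact sum_congr rfl fun f hf => by rw [(mem_filter.mp hf).2]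

theorem card_surjStrictColorings_succ (hk : k < N) :
    #(surjStrictColorings N r S (k + 1)) =
      ∑ A ∈ (relMaximals r S).powerset.erase ∅, #(surjStrictColorings N r (S \ A) k) := by
  rw [card_eq_sum_ones, sum_surjStrictColorings_succ hk fun _ => 1]
  simp only [smul_eq_mul, mul_one]

theorem sum_powerset_erase_empty_neg_one_pow_card {R α : Type*} [CommRing R] {M : Finset α}
    (hM : M.Nonempty) : ∑ A ∈ M.powerset.erase ∅, (-1 : R) ^ #A = -1 := by
  have := sum_powerset_neg_one_pow_card_mul_choose (R := R) M 0
  simp only [Nat.choose_zero_right, Nat.cast_one, mul_one, card_eq_zero, hM.ne_empty,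
    if_false] at this
  rw [sum_erase_eq_sub (empty_mem_powerset M), this, card_empty, pow_zero, zero_sub]

theorem sum_range_neg_one_pow_mul_card_surjStrictColorings {R : Type*} [CommRing R]
    (hr : ∀ a, ¬ Relation.TransGen r a a) (hS : #S < N) :
    ∑ k ∈ range N, (-1 : R) ^ k * #(surjStrictColorings N r S k) = (-1) ^ #S := by
  induction S using Finset.strongInduction with
  | H S ih =>
  obtain ⟨M, rfl⟩ : ∃ M, N = M + 1 := ⟨N - 1, by omega⟩
  rcases S.eq_empty_or_nonempty with rfl | hS₀
  · rw [sum_range_succ', sum_eq_zero fun k _ => by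
      rw [surjStrictColorings_eq_empty_of_card_lt (by simp), card_empty, Nat.cast_zero, mul_zero]]
    simp [card_surjStrictColorings_empty_zero]
  have hsucc : ∀ k ∈ range M, (-1 : R) ^ (k + 1) * #(surjStrictColorings (M + 1) r S (k + 1)) =
      -∑ A ∈ (relMaximals r S).powerset.erase ∅,
        (-1 : R) ^ k * #(surjStrictColorings (M + 1) r (S \ A) k) := fun k hk => by
    rw [card_surjStrictColorings_succ (by simp at hk; omega), Nat.cast_sum, mul_sum,
      ← sum_neg_distrib]
    exact sum_congr rfl fun _ _ => by ring
  have hrec : ∀ A ∈ (relMaximals r S).powerset.erase ∅,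
      ∑ k ∈ range M, (-1 : R) ^ k * #(surjStrictColorings (M + 1) r (S \ A) k) =
        (-1) ^ #S * (-1) ^ #A := fun A hA => by
    obtain ⟨hA₀, hA⟩ := mem_erase.mp hA
    have hAS : A ⊆ S := (mem_powerset.mp hA).trans (filter_subset _ _)
    have hsub : S \ A ⊂ S := sdiff_ssubset hAS (nonempty_iff_ne_empty.mpr hA₀)
    have hlt := card_lt_card hsub
    rw [← neg_one_pow_card_sdiff hAS, ← ih _ hsub (by omega), sum_range_succ,
      surjStrictColorings_eq_empty_of_card_lt (by omega), card_empty, Nat.cast_zero, mul_zero,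
      add_zero]
  rw [sum_range_succ', surjStrictColorings_zero hS₀, card_empty, Nat.cast_zero, mul_zero,
    add_zero, sum_congr rfl hsucc, sum_neg_distrib, sum_comm, sum_congr rfl hrec, ← mul_sum,
    sum_powerset_erase_empty_neg_one_pow_card (relMaximals_nonempty hr hS₀)]
  ring

end StrictColorings

section SinkFunctional

variable {V : Type*} [Fintype V] {N : ℕ}

noncomputable def colorMonomial (f : V → Fin N) : Fin N →₀ ℕ :=
  ∑ v, Finsupp.single (f v) 1

theorem prod_X_eq_monomial_colorMonomial (f : V → Fin N) :
    ∏ v, (MvPolynomial.X (f v) : MvPolynomial (Fin N) ℚ) =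
      MvPolynomial.monomial (colorMonomial f) 1 := by
  rw [colorMonomial, MvPolynomial.monomial_sum_one]
  rfl

theorem colorMonomial_apply (f : V → Fin N) (c : Fin N) :
    colorMonomial f c = #(univ.filter fun v => f v = c) := by
  rw [colorMonomial, Finsupp.finsetSum_apply, card_filter]
  exact sum_congr rfl fun v _ => Finsupp.single_apply

theorem support_colorMonomial (f : V → Fin N) : (colorMonomial f).support = univ.image f := by
  ext c
  simp [colorMonomial_apply, filter_eq_empty_iff]

theorem degree_colorMonomial (f : V → Fin N) : (colorMonomial f).degree = Fintype.card V := by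
  simp [colorMonomial, Finsupp.degree_single]

/-- The sign makes the alternating count of the colorings below the top color class collapse to
`(-1) ^ #A`, and then `∑ A ⊆ M, (-1) ^ #A * (#A).choose j = (-1) ^ j * [#M = j]` keeps exactly
the sets of sinks of size `j`. -/
noncomputable def sinkWeight (j : ℕ) (μ : Fin N →₀ ℕ) : ℚ :=
  ∑ k : Fin N, if μ.support.image Fin.val = range (k + 1) then
    (-1) ^ (μ.degree + j + k) * ((μ k).choose j : ℚ) else 0

noncomputable def sinkFunctional (N j : ℕ) : MvPolynomial (Fin N) ℚ →ₗ[ℚ] ℚ :=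
  (MvPolynomial.basisMonomials (Fin N) ℚ).constr ℚ (sinkWeight j)

theorem sinkFunctional_monomial (j : ℕ) (μ : Fin N →₀ ℕ) :
    sinkFunctional N j (MvPolynomial.monomial μ 1) = sinkWeight j μ := by
  have := (MvPolynomial.basisMonomials (Fin N) ℚ).constr_basis ℚ (sinkWeight j) μ
  rwa [MvPolynomial.coe_basisMonomials] at this

theorem sinkFunctional_prod_X (j : ℕ) (f : V → Fin N) :
    sinkFunctional N j (∏ v, MvPolynomial.X (f v)) = ∑ k : Fin N,
      if univ.image (fun v => (f v : ℕ)) = range (k + 1) then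
        (-1) ^ (Fintype.card V + j + k) * ((#(univ.filter fun v => (f v : ℕ) = k)).choose j : ℚ)
      else 0 := by
  simp only [prod_X_eq_monomial_colorMonomial, sinkFunctional_monomial, sinkWeight,
    support_colorMonomial, image_image, Function.comp_def, degree_colorMonomial,
    colorMonomial_apply, Fin.val_inj]

noncomputable def strictColoringSum (r : V → V → Prop) (N : ℕ) : MvPolynomial (Fin N) ℚ :=
  ∑ f ∈ univ.filter (IsStrictColoring r), ∏ v, MvPolynomial.X (f v)

variable {r : V → V → Prop} {j : ℕ}

theorem surjStrictColorings_univ (k : ℕ) :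
    surjStrictColorings N r univ k =
      univ.filter fun f => IsStrictColoring r f ∧ univ.image (fun v => (f v : ℕ)) = range k := by
  ext f
  simp [surjStrictColorings, IsStrictColoring, and_comm]

theorem sinkFunctional_strictColoringSum_eq_sum_surjStrictColorings :
    sinkFunctional N j (strictColoringSum r N) =
      ∑ k : Fin N, ∑ f ∈ surjStrictColorings N r univ (k + 1),
        (-1) ^ (Fintype.card V + j + k) *
          ((#(univ.filter fun v => (f v : ℕ) = k)).choose j : ℚ) := by
  rw [strictColoringSum, map_sum, sum_congr rfl fun f _ => sinkFunctional_prod_X j f, sum_comm]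
  refine sum_congr rfl fun k _ => ?_
  rw [surjStrictColorings_univ, ← filter_filter]
  exact (sum_filter _ _).symm

theorem sinkFunctional_strictColoringSum (hr : ∀ a, ¬ Relation.TransGen r a a)
    (hV : Fintype.card V ≤ N) (hj : 1 ≤ j) :
    sinkFunctional N j (strictColoringSum r N) = if #(relMaximals r univ) = j then 1 else 0 := by
  have hfiber : ∀ k : Fin N, ∑ f ∈ surjStrictColorings N r univ (k + 1),
      (-1) ^ (Fintype.card V + j + k) * ((#(univ.filter fun v => (f v : ℕ) = k)).choose j : ℚ) =
      ∑ A ∈ (relMaximals r univ).powerset.erase ∅, (-1) ^ (Fintype.card V + j) *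
        ((#A).choose j : ℚ) * ((-1) ^ (k : ℕ) * #(surjStrictColorings N r (univ \ A) k)) :=
    fun k => by
      rw [sum_surjStrictColorings_succ k.isLt fun A =>
        (-1 : ℚ) ^ (Fintype.card V + j + k) * (#A).choose j]
      exact sum_congr rfl fun A _ => by rw [nsmul_eq_mul]; ring
  have halt : ∀ A ∈ (relMaximals r univ).powerset.erase ∅, ∑ k : Fin N,
      (-1) ^ (Fintype.card V + j) * ((#A).choose j : ℚ) *
        ((-1) ^ (k : ℕ) * #(surjStrictColorings N r (univ \ A) k)) =
      (-1) ^ (#A + j) * (#A).choose j := fun A hA => by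
    have hlt : #(univ \ A) < N := lt_of_lt_of_le (card_lt_card (sdiff_ssubset (subset_univ A)
      (nonempty_iff_ne_empty.mpr (mem_erase.mp hA).1))) (by simpa using hV)
    have hsq : (-1 : ℚ) ^ Fintype.card V * (-1) ^ Fintype.card V = 1 := by
      rw [← pow_add, Even.neg_one_pow ⟨_, rfl⟩]
    rw [← mul_sum, Fin.sum_univ_eq_sum_range (fun k => (-1 : ℚ) ^ k *
        #(surjStrictColorings N r (univ \ A) k)),
      sum_range_neg_one_pow_mul_card_surjStrictColorings hr hlt,
      neg_one_pow_card_sdiff (subset_univ A), card_univ]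
    linear_combination ((-1) ^ (#A + j) * ((#A).choose j : ℚ)) * hsq
  rw [sinkFunctional_strictColoringSum_eq_sum_surjStrictColorings,
    sum_congr rfl fun k _ => hfiber k, sum_comm, sum_congr rfl halt,
    sum_erase _ (by simp [Nat.choose_eq_zero_of_lt (by omega : 0 < j)])]
  rw [sum_congr rfl fun A _ => by rw [pow_add, mul_right_comm], ← sum_mul,
    sum_powerset_neg_one_pow_card_mul_choose]
  split_ifs <;> simp [← pow_add]

end SinkFunctional

section DisjointChains

variable {ι : Type*} {N : ℕ}

def disjointChains (m : ι → ℕ) (a b : Σ i, Fin (m i)) : Prop :=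
  a.1 = b.1 ∧ (a.2 : ℕ) < b.2

theorem esymm_eq_sum_strictMono (m : ℕ) :
    MvPolynomial.esymm (Fin N) ℚ m =
      ∑ g : {g : Fin m → Fin N // StrictMono g}, ∏ a, MvPolynomial.X (g.1 a) := by
  have hcard : ∀ g : {g : Fin m → Fin N // StrictMono g}, #(univ.image g.1) = m := fun g => by
    rw [card_image_of_injective _ g.2.injective, card_fin]
  rw [MvPolynomial.esymm]
  refine (sum_bij (fun g _ => univ.image g.1) (fun g _ => mem_powersetCard_univ.mpr (hcard g))
    (fun g _ h _ hgh => Subtype.ext ?_) (fun s hs => ?_) (fun g _ => ?_)).symm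
  · exact (orderEmbOfFin_unique (hcard g) (fun a => mem_image_of_mem _ (mem_univ a)) g.2).trans
      (orderEmbOfFin_unique (hcard g) (fun a => hgh ▸ mem_image_of_mem _ (mem_univ a)) h.2).symm
  · have hs := mem_powersetCard_univ.mp hs
    exact ⟨⟨s.orderEmbOfFin hs, (s.orderEmbOfFin hs).strictMono⟩, mem_univ _,
      image_orderEmbOfFin_univ s hs⟩
  · exact (prod_image fun a _ b _ hab => g.2.injective hab).symm

def disjointChainsColoringEquiv (m : ι → ℕ) (N : ℕ) :
    {f : (Σ i, Fin (m i)) → Fin N // IsStrictColoring (disjointChains m) f} ≃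
      ∀ i, {g : Fin (m i) → Fin N // StrictMono g} where
  toFun f i := ⟨fun a => f.1 ⟨i, a⟩, fun _ _ hab => f.2 _ _ ⟨rfl, hab⟩⟩
  invFun g := ⟨fun a => (g a.1).1 a.2, by rintro ⟨i, a⟩ ⟨i', b⟩ ⟨rfl, hab⟩; exact (g i).2 hab⟩
  left_inv _ := rfl
  right_inv _ := rfl

theorem prod_esymm_eq_strictColoringSum [Fintype ι] (m : ι → ℕ) :
    ∏ i, MvPolynomial.esymm (Fin N) ℚ (m i) = strictColoringSum (disjointChains m) N := by
  rw [Finset.prod_congr rfl fun i _ => esymm_eq_sum_strictMono (m i), Fintype.prod_sum,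
    strictColoringSum, sum_subtype (p := IsStrictColoring (disjointChains m)) _ (by simp)]
  refine Fintype.sum_equiv (disjointChainsColoringEquiv m N).symm _ _ fun g => ?_
  rw [Fintype.prod_sigma]
  rfl

theorem relMaximals_disjointChains [Fintype ι] (m : ι → ℕ) :
    relMaximals (disjointChains m) univ =
      univ.sigma fun i => univ.filter fun a : Fin (m i) => (a : ℕ) + 1 = m i := by
  ext ⟨i, a⟩
  simp only [relMaximals, disjointChains, mem_filter, mem_univ, true_and, mem_sigma,
    forall_const, not_and, not_lt]
  constructor
  · intro h
    by_contra hne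
    have := h ⟨i, ⟨a + 1, by omega⟩⟩ rfl
    simp at this
  · rintro h ⟨i', b⟩ rfl
    have := b.isLt
    dsimp only
    omega

theorem card_filter_val_add_one_eq (k : ℕ) :
    #(univ.filter fun a : Fin k => (a : ℕ) + 1 = k) = if k ≠ 0 then 1 else 0 := by
  cases k with
  | zero => simp
  | succ k =>
    rw [if_pos k.succ_ne_zero, card_eq_one]
    exact ⟨Fin.last k, by ext a; simp [Fin.ext_iff]⟩

theorem card_relMaximals_disjointChains [Fintype ι] (m : ι → ℕ) :
    #(relMaximals (disjointChains m) univ) = #(univ.filter fun i => m i ≠ 0) := by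
  rw [relMaximals_disjointChains, card_sigma, card_filter]
  exact sum_congr rfl fun i _ => card_filter_val_add_one_eq (m i)

end DisjointChains

theorem sinkFunctional_eProd {n N j : ℕ} {p : Fin n → Fin (n + 1)} (hp : p ∈ partitionsOf n)
    (hN : n ≤ N) (hj : 1 ≤ j) :
    sinkFunctional N j (eProd N p) =
      if #(univ.filter fun i => (p i : ℕ) ≠ 0) = j then 1 else 0 := by
  have hcard : Fintype.card (Σ i, Fin (p i : ℕ)) = n := by
    simpa using (mem_filter.mp hp).2.2
  rw [eProd, prod_esymm_eq_strictColoringSum fun i => (p i : ℕ),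
    sinkFunctional_strictColoringSum
      (not_transGen_self_of_lt_comp (fun a => (a.2 : ℕ)) fun _ _ h => h.2) (hcard.le.trans hN) hj,
    card_relMaximals_disjointChains]

theorem sinkFunctional_coeff_sum_eProd {n N j : ℕ} (hN : n ≤ N) (hj : 1 ≤ j)
    (cfam : (Fin n → Fin (n + 1)) → Polynomial ℚ) (d : ℕ) :
    sinkFunctional N j ((∑ p ∈ partitionsOf n,
        (cfam p).map (MvPolynomial.C : ℚ →+* MvPolynomial (Fin N) ℚ) *
          Polynomial.C (eProd N p)).coeff d) =
      (∑ p ∈ (partitionsOf n).filter (fun p => #(univ.filter fun i => (p i : ℕ) ≠ 0) = j),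
        cfam p).coeff d := by
  rw [Polynomial.finsetSum_coeff, Polynomial.finsetSum_coeff, map_sum, sum_filter]
  refine sum_congr rfl fun p hp => ?_
  rw [Polynomial.coeff_mul_C, Polynomial.coeff_map, MvPolynomial.C_mul', map_smul,
    sinkFunctional_eProd hp hN hj, smul_eq_mul]
  split_ifs <;> simp

section Orientations

variable {n N : ℕ} {lt : Fin n → Fin n → Prop}

theorem Incomp.symm {a b : Fin n} (h : Incomp lt a b) : Incomp lt b a :=
  ⟨h.1.symm, h.2.2, h.2.1⟩

theorem IsOrientation.eq_true_of_eq_false {o : Fin n → Fin n → Bool} (ho : IsOrientation lt o)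
    {a b : Fin n} (hab : Incomp lt a b) (h : o a b = false) : o b a = true := by
  have := ho.2 b a hab.symm
  cases hba : o b a <;> simp_all

def IsAcyclicOrientation (lt : Fin n → Fin n → Prop) (o : Fin n → Fin n → Bool) : Prop :=
  IsOrientation lt o ∧ ∀ a, ¬ Relation.TransGen (fun x y => o x y = true) a a

theorem acyclicOrientations_eq_filter (j : ℕ) :
    acyclicOrientations lt j = (univ.filter (IsAcyclicOrientation lt)).filter
      fun o => #(relMaximals (fun x y => o x y = true) univ) = j := by
  ext o
  simp [acyclicOrientations, IsAcyclicOrientation, relMaximals, and_assoc]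

noncomputable def orientationOfColoring (lt : Fin n → Fin n → Prop) (c : Fin n → Fin N) :
    Fin n → Fin n → Bool :=
  fun a b => decide (Incomp lt a b ∧ c a < c b)

theorem orientationOfColoring_eq_true {c : Fin n → Fin N} {a b : Fin n} :
    orientationOfColoring lt c a b = true ↔ Incomp lt a b ∧ c a < c b :=
  decide_eq_true_iff

theorem isAcyclicOrientation_orientationOfColoring {c : Fin n → Fin N}
    (hc : ∀ a b, Incomp lt a b → c a ≠ c b) :
    IsAcyclicOrientation lt (orientationOfColoring lt c) := by
  refine ⟨⟨fun a b h => (orientationOfColoring_eq_true.mp h).1, fun a b hab => ?_⟩,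
    not_transGen_self_of_lt_comp c fun a b h => (orientationOfColoring_eq_true.mp h).2⟩
  rw [← Bool.not_eq_true, orientationOfColoring_eq_true, orientationOfColoring_eq_true]
  simp only [hab, hab.symm, true_and, not_lt]
  exact ⟨le_of_lt, fun h => lt_of_le_of_ne h (hc a b hab)⟩

theorem isStrictColoring_iff_orientationOfColoring_eq {o : Fin n → Fin n → Bool}
    (ho : IsOrientation lt o) {c : Fin n → Fin N} :
    IsStrictColoring (fun a b => o a b = true) c ↔
      (∀ a b, Incomp lt a b → c a ≠ c b) ∧ orientationOfColoring lt c = o := by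
  refine ⟨fun hc => ⟨fun a b hab => ?_, funext₂ fun a b => ?_⟩, ?_⟩
  · cases h : o a b
    · exact (hc b a (ho.eq_true_of_eq_false hab h)).ne'
    · exact (hc a b h).ne
  · cases h : o a b
    · rw [← Bool.not_eq_true, orientationOfColoring_eq_true]
      exact fun ⟨hab, hlt⟩ => (hc b a (ho.eq_true_of_eq_false hab h)).not_gt hlt
    · exact orientationOfColoring_eq_true.mpr ⟨ho.1 a b h, hc a b h⟩
  · rintro ⟨-, rfl⟩ a b h
    exact (orientationOfColoring_eq_true.mp h).2

theorem ascC_eq_ascOrient_orientationOfColoring (c : Fin n → Fin N) :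
    ascC lt c = ascOrient (orientationOfColoring lt c) := by
  simp [ascC, ascOrient, orientationOfColoring]

theorem chromIncQSymQ_eq_sum_isAcyclicOrientation (N : ℕ) (lt : Fin n → Fin n → Prop) :
    chromIncQSymQ N n lt = ∑ o ∈ univ.filter (IsAcyclicOrientation lt),
      Polynomial.C (strictColoringSum (fun a b => o a b = true) N) *
        Polynomial.X ^ ascOrient o := by
  rw [chromIncQSymQ, ← sum_fiberwise_of_maps_to (g := orientationOfColoring lt)
    (t := univ.filter (IsAcyclicOrientation lt)) fun c hc =>
      mem_filter.mpr ⟨mem_univ _, isAcyclicOrientation_orientationOfColoring (mem_filter.mp hc).2⟩]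
  refine sum_congr rfl fun o ho => ?_
  rw [strictColoringSum, map_sum, sum_mul]
  refine sum_congr (by
    ext c
    simp only [filter_filter, mem_filter, mem_univ, true_and]
    exact (isStrictColoring_iff_orientationOfColoring_eq (mem_filter.mp ho).2.1).symm)
    fun c hc => ?_
  rw [ascC_eq_ascOrient_orientationOfColoring, mul_comm,
    ((isStrictColoring_iff_orientationOfColoring_eq (mem_filter.mp ho).2.1).mp
      (mem_filter.mp hc).2).2]

theorem sinkFunctional_coeff_chromIncQSymQ {j : ℕ} (hN : n ≤ N) (hj : 1 ≤ j) (d : ℕ) :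
    sinkFunctional N j ((chromIncQSymQ N n lt).coeff d) =
      (∑ o ∈ acyclicOrientations lt j, (Polynomial.X : Polynomial ℚ) ^ ascOrient o).coeff d := by
  rw [chromIncQSymQ_eq_sum_isAcyclicOrientation, acyclicOrientations_eq_filter,
    Polynomial.finsetSum_coeff, Polynomial.finsetSum_coeff, map_sum,
    sum_filter (s := univ.filter (IsAcyclicOrientation lt))]
  refine sum_congr rfl fun o ho => ?_
  rw [Polynomial.coeff_C_mul_X_pow, Polynomial.coeff_X_pow, apply_ite (sinkFunctional N j),
    map_zero, sinkFunctional_strictColoringSum (mem_filter.mp ho).2.2 (by simpa using hN) hj]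
  split_ifs <;> rfl

end Orientations

/-- for a natural unit interval order `P` on `[n]` with `G = inc(P)`
and `N ≥ n`, if `X_G(x;t) = ∑_{λ⊢n} c_λ(t) e_λ` then for every `j ≥ 1`,
`∑_{λ⊢n, ℓ(λ)=j} c_λ(t) = ∑_{o ∈ O(G,j)} t^{asc(o)}`. -/
theorem chromatic_qsym_e_sink_formula (n N : ℕ) (hN : n ≤ N) (P : NUIO n)
    (cfam : (Fin n → Fin (n + 1)) → Polynomial ℚ)
    (hc : chromIncQSymQ N n P.lt =
      ∑ p ∈ partitionsOf n,
        (cfam p).map (MvPolynomial.C : ℚ →+* MvPolynomial (Fin N) ℚ) *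
          Polynomial.C (eProd N p)) :
    ∀ j, 1 ≤ j →
      (∑ p ∈ (partitionsOf n).filter
          (fun p => (Finset.univ.filter fun i => (p i : ℕ) ≠ 0).card = j), cfam p) =
      ∑ o ∈ acyclicOrientations P.lt j, (Polynomial.X : Polynomial ℚ) ^ ascOrient o := by
  intro j hj
  ext d
  rw [← sinkFunctional_coeff_sum_eProd hN hj cfam d, ← hc, sinkFunctional_coeff_chromIncQSymQ hN hj]
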